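/- Let X be a real Banach space that is isomorphic (via a continuous linear equivalence) to X × X, and let I be an ideal in L(X). Then I^† := { B∘S*∘A : S ∈ I, A, B ∈ L(X*) } is an ideal in L(X*): it is nonempty, closed under addition, and satisfies A'∘U∘B' ∈ I^† whenever U ∈ I^† and A', B' ∈ L(X*). -/

import Mathlib

open MeasureTheory NormedSpace

noncomputable section

/-- `I` is an ideal in the Banach algebra `L(X)`: it is nonempty, closed under addition,
and closed under composition with arbitrary bounded operators on both sides. -/
def IsOpIdeal {X : Type*} [NormedAddCommGroup X] [NormedSpace ℝ X]
    (I : Set (X →L[ℝ] X)) : Prop :=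
  I.Nonempty ∧ (∀ T ∈ I, ∀ S ∈ I, T + S ∈ I) ∧
    ∀ T ∈ I, ∀ A B : X →L[ℝ] X, A ∘L T ∘L B ∈ I

/-- The adjoint (dual map) `S* : Y* → X*` of a bounded operator `S : X → Y`. -/
def opDual {X Y : Type*} [NormedAddCommGroup X] [NormedSpace ℝ X]
    [NormedAddCommGroup Y] [NormedSpace ℝ Y] (S : X →L[ℝ] Y) :
    StrongDual ℝ Y →L[ℝ] StrongDual ℝ X :=
  (ContinuousLinearMap.compL ℝ X Y ℝ).flip S

/-- The set `I^† = { B ∘ S* ∘ A : S ∈ I, A, B ∈ L(X*) }` in `L(X*)`. -/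
def dagger {X : Type*} [NormedAddCommGroup X] [NormedSpace ℝ X]
    (I : Set (X →L[ℝ] X)) : Set (StrongDual ℝ X →L[ℝ] StrongDual ℝ X) :=
  {V | ∃ S ∈ I, ∃ A B : StrongDual ℝ X →L[ℝ] StrongDual ℝ X, V = B ∘L opDual S ∘L A}

section OrthogonalPair

variable {R : Type*} [Semiring R] {u₁ u₂ v₁ v₂ : R}

theorem add_mul_mul_add_of_orthogonal (h₁₁ : v₁ * u₁ = 1) (h₂₂ : v₂ * u₂ = 1)
    (h₁₂ : v₁ * u₂ = 0) (h₂₁ : v₂ * u₁ = 0) (b₁ b₂ x₁ x₂ : R) :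
    (b₁ * v₁ + b₂ * v₂) * (u₁ * x₁ + u₂ * x₂) = b₁ * x₁ + b₂ * x₂ := by
  simp only [add_mul, mul_add, mul_assoc, ← mul_assoc v₁, ← mul_assoc v₂, h₁₁, h₂₂, h₁₂, h₂₁,
    zero_mul, mul_zero, one_mul, add_zero, zero_add]

theorem add_mul_mul_eq_mul_mul_of_orthogonal (h₁₁ : v₁ * u₁ = 1) (h₂₂ : v₂ * u₂ = 1)
    (h₁₂ : v₁ * u₂ = 0) (h₂₁ : v₂ * u₁ = 0) (a₁ a₂ b₁ b₂ c₁ c₂ : R) :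
    b₁ * a₁ * c₁ + b₂ * a₂ * c₂ =
      (b₁ * v₁ + b₂ * v₂) * (u₁ * a₁ * v₁ + u₂ * a₂ * v₂) * (u₁ * c₁ + u₂ * c₂) := by
  have key := add_mul_mul_add_of_orthogonal h₁₁ h₂₂ h₁₂ h₂₁
  rw [mul_assoc _ (u₁ * a₁ * v₁ + _), key, mul_assoc u₁, mul_assoc u₂, key, mul_assoc b₁,
    mul_assoc b₂]

end OrthogonalPair

theorem exists_orthogonal_of_equiv_prod {𝕜 E : Type*} [Semiring 𝕜] [TopologicalSpace E]
    [AddCommMonoid E] [Module 𝕜 E] (e : E ≃L[𝕜] E × E) :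
    ∃ p₁ p₂ j₁ j₂ : E →L[𝕜] E, p₁ * j₁ = 1 ∧ p₂ * j₂ = 1 ∧ p₁ * j₂ = 0 ∧ p₂ * j₁ = 0 := by
  refine ⟨.fst 𝕜 E E ∘L (e : E →L[𝕜] E × E), .snd 𝕜 E E ∘L (e : E →L[𝕜] E × E),
    (e.symm : E × E →L[𝕜] E) ∘L .inl 𝕜 E E, (e.symm : E × E →L[𝕜] E) ∘L .inr 𝕜 E E,
    ?_, ?_, ?_, ?_⟩ <;> ext x <;> simp

section opDual

variable {X Y : Type*} [NormedAddCommGroup X] [NormedSpace ℝ X]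
  [NormedAddCommGroup Y] [NormedSpace ℝ Y]

theorem opDual_mul (S T : X →L[ℝ] X) : opDual (S * T) = opDual T * opDual S :=
  rfl

theorem opDual_one : opDual (1 : X →L[ℝ] X) = 1 :=
  rfl

theorem opDual_add (S T : X →L[ℝ] Y) : opDual (S + T) = opDual S + opDual T :=
  map_add _ S T

theorem opDual_zero : opDual (0 : X →L[ℝ] Y) = 0 :=
  map_zero _

end opDual

section dagger

variable {X : Type*} [NormedAddCommGroup X] [NormedSpace ℝ X] {I : Set (X →L[ℝ] X)}

theorem dagger_nonempty (hI : I.Nonempty) : (dagger I).Nonempty :=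
  let ⟨S, hS⟩ := hI
  ⟨_, S, hS, 1, 1, rfl⟩

theorem comp_comp_mem_dagger {U : StrongDual ℝ X →L[ℝ] StrongDual ℝ X} (hU : U ∈ dagger I)
    (A' B' : StrongDual ℝ X →L[ℝ] StrongDual ℝ X) : A' ∘L U ∘L B' ∈ dagger I := by
  obtain ⟨S, hS, A, B, rfl⟩ := hU
  exact ⟨S, hS, A ∘L B', A' ∘L B, rfl⟩

/-- With `X ≅ X × X`, the two summands `S₁*, S₂*` are merged into the adjoint of the single
operator `j₁ S₁ p₁ + j₂ S₂ p₂ ∈ I`, where `p_i, j_i` are the coordinate projections and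
embeddings transported along the isomorphism. -/
theorem add_mem_dagger (e : X ≃L[ℝ] X × X) (hI : IsOpIdeal I)
    {U V : StrongDual ℝ X →L[ℝ] StrongDual ℝ X} (hU : U ∈ dagger I) (hV : V ∈ dagger I) :
    U + V ∈ dagger I := by
  obtain ⟨-, hadd, hcomp⟩ := hI
  obtain ⟨S₁, hS₁, A₁, B₁, rfl⟩ := hU
  obtain ⟨S₂, hS₂, A₂, B₂, rfl⟩ := hV
  obtain ⟨p₁, p₂, j₁, j₂, h₁₁, h₂₂, h₁₂, h₂₁⟩ := exists_orthogonal_of_equiv_prod e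
  have d₁₁ : opDual j₁ * opDual p₁ = 1 := by rw [← opDual_mul, h₁₁, opDual_one]
  have d₂₂ : opDual j₂ * opDual p₂ = 1 := by rw [← opDual_mul, h₂₂, opDual_one]
  have d₁₂ : opDual j₁ * opDual p₂ = 0 := by rw [← opDual_mul, h₂₁, opDual_zero]
  have d₂₁ : opDual j₂ * opDual p₁ = 0 := by rw [← opDual_mul, h₁₂, opDual_zero]
  refine ⟨j₁ * S₁ * p₁ + j₂ * S₂ * p₂, hadd _ (hcomp _ hS₁ _ _) _ (hcomp _ hS₂ _ _),
    opDual p₁ * A₁ + opDual p₂ * A₂, B₁ * opDual j₁ + B₂ * opDual j₂, ?_⟩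
  simp only [← ContinuousLinearMap.mul_def, opDual_add, opDual_mul, ← mul_assoc]
  exact add_mul_mul_eq_mul_mul_of_orthogonal d₁₁ d₂₂ d₁₂ d₂₁ (opDual S₁) (opDual S₂) B₁ B₂ A₁ A₂

end dagger

/-- **Proposition.** If the Banach space `X` is isomorphic to its square `X × X` and `I`
is an ideal in `L(X)`, then `I^† = { B ∘ S* ∘ A : S ∈ I, A, B ∈ L(X*) }` is an ideal
in `L(X*)`: it is nonempty, closed under addition, and closed under two-sided
composition with bounded operators on `X*`. -/
theorem dagger_isIdeal {X : Type*} [NormedAddCommGroup X] [NormedSpace ℝ X]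
    (e : X ≃L[ℝ] X × X) (I : Set (X →L[ℝ] X)) (hI : IsOpIdeal I) :
    (dagger I).Nonempty ∧
      (∀ U ∈ dagger I, ∀ V ∈ dagger I, U + V ∈ dagger I) ∧
      (∀ U ∈ dagger I, ∀ A' B' : StrongDual ℝ X →L[ℝ] StrongDual ℝ X,
        A' ∘L U ∘L B' ∈ dagger I) :=
  ⟨dagger_nonempty hI.1, fun _ hU _ hV => add_mem_dagger e hI hU hV,
    fun _ hU => comp_comp_mem_dagger hU⟩
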